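/- Let (g, [·,·]) be a Lie algebra, i ⊆ g an ideal, and δ: g → Λ²(g/i) a Lie algebra 1-cocycle whose dual δᵗ: i° × i° → g* defines a Lie bracket on the annihilator i° ⊆ g*. Equip the vector space m = (g/i) × i° with the quadratic Lie algebra structure of the double of the Lie bialgebra (g/i, i°). Then (m, i°) is a g-Manin pair: i° is a Lagrangian subalgebra of m and the map Φ: g → m, x ↦ (x + i, 0), is a Lie algebra morphism with isotropic image satisfying Φ(g) + i° = m and ⟨Φ(x), ξ⟩ = ⟨x, ξ⟩ for all x ∈ g, ξ ∈ i°. -/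

import Mathlib

variable {g : Type*} [LieRing g] [LieAlgebra ℝ g]

/-- The annihilator `i° ⊆ g*` of an ideal `i ⊆ g`. -/
noncomputable abbrev annIdeal (I : LieIdeal ℝ g) : Submodule ℝ (Module.Dual ℝ g) :=
  (I.toSubmodule).dualAnnihilator

/-- The coadjoint action of `g` on the annihilator `i°` of an ideal:
`(x ⋆ ξ)(y) = −ξ([x,y])`. -/
noncomputable def coadA (I : LieIdeal ℝ g) (x : g) (ξ : annIdeal I) : annIdeal I :=
  ⟨-((ξ : Module.Dual ℝ g) ∘ₗ (LieAlgebra.ad ℝ g x)), by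
    rw [Submodule.mem_dualAnnihilator]
    intro w hw
    have h := ((Submodule.mem_dualAnnihilator _).mp ξ.2) ⁅x, w⁆ (I.lie_mem hw)
    simp only [LinearMap.neg_apply, LinearMap.coe_comp, Function.comp_apply,
      LieAlgebra.ad_apply, h, neg_zero]⟩

/-- An element of `i° ≅ (g/i)*` evaluated on the quotient `g/i`. -/
noncomputable def evalQ (I : LieIdeal ℝ g) (ξ : annIdeal I) : (g ⧸ I) →ₗ[ℝ] ℝ :=
  Submodule.liftQ I.toSubmodule (ξ : Module.Dual ℝ g) (by
    intro w hw
    exact ((Submodule.mem_dualAnnihilator _).mp ξ.2) w hw)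

/-- The canonical pairing on the double `m = (g/i) × i°`:
`⟨(x,ξ),(y,η)⟩ = ξ(y) + η(x)`. -/
noncomputable def dblPairing (I : LieIdeal ℝ g) (z w : (g ⧸ I) × annIdeal I) : ℝ :=
  evalQ I z.2 w.1 + evalQ I w.2 z.1

/-- The embedding `Φ : g → m = (g/i) × i°`, `x ↦ (x + i, 0)`. -/
noncomputable def PhiMap (I : LieIdeal ℝ g) (x : g) : (g ⧸ I) × annIdeal I :=
  (Submodule.Quotient.mk x, 0)

/-
The double is written down explicitly. With `L = g/i` and `A = i° ≅ L*`, the bracket on `L × A` is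
`⁅(x, ξ), (y, η)⁆ = (⁅x, y⁆ + ad*_ξ y - ad*_η x, ⁅ξ, η⁆ + ad*_x η - ad*_y ξ)`,
where `ad*_x` is the coadjoint action of `L` on `A ≅ L*` and `ad*_ξ` the coadjoint action of `A`
on `L ≅ A*`. Bilinearity, skew-symmetry and invariance of the pairing are direct computations.
The Jacobiator is trilinear and alternating, so it vanishes once it vanishes on the four triples
of pure elements of type `LLL`, `LLA`, `LAA`, `AAA`. The outer two are the Jacobi identities of
`L` and `A`; each mixed one splits into a component saying that a coadjoint action is a
representation, and a component which is the cocycle condition on `δ`. Finally `δ` descends to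
`g/i` because `δᵗ` takes values in `i°`.
-/

theorem Prod.eq_zero_of_antisymm_of_sorted {M N P : Type*} [AddCommGroup M] [AddCommGroup N]
    [AddCommGroup P] {J : M × N → M × N → M × N → P}
    (hadd : ∀ a a' b c, J (a + a') b c = J a b c + J a' b c)
    (hswap₁₂ : ∀ a b c, J b a c = -J a b c) (hswap₂₃ : ∀ a b c, J a c b = -J a b c)
    (h₀₀₀ : ∀ x y z, J (x, 0) (y, 0) (z, 0) = 0) (h₀₀₁ : ∀ x y ζ, J (x, 0) (y, 0) (0, ζ) = 0)
    (h₀₁₁ : ∀ x η ζ, J (x, 0) (0, η) (0, ζ) = 0) (h₁₁₁ : ∀ ξ η ζ, J (0, ξ) (0, η) (0, ζ) = 0)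
    (a b c : M × N) : J a b c = 0 := by
  have hadd₂ : ∀ a b b' c, J a (b + b') c = J a b c + J a b' c := fun a b b' c => by
    rw [← neg_neg (J a _ c), ← hswap₁₂, hadd, hswap₁₂ a b, hswap₁₂ a b', neg_add, neg_neg, neg_neg]
  have hadd₃ : ∀ a b c c', J a b (c + c') = J a b c + J a b c' := fun a b c c' => by
    rw [← neg_neg (J a b _), ← hswap₂₃, hadd₂, hswap₂₃ a b c, hswap₂₃ a b c', neg_add, neg_neg,
      neg_neg]
  have h₀₁₀ : ∀ x y ζ, J (x, 0) (0, ζ) (y, 0) = 0 := fun x y ζ => by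
    rw [hswap₂₃, h₀₀₁, neg_zero]
  have h₁₀₀ : ∀ x y ζ, J (0, ζ) (x, 0) (y, 0) = 0 := fun x y ζ => by
    rw [hswap₁₂, h₀₁₀, neg_zero]
  have h₁₀₁ : ∀ x η ζ, J (0, η) (x, 0) (0, ζ) = 0 := fun x η ζ => by
    rw [hswap₁₂, h₀₁₁, neg_zero]
  have h₁₁₀ : ∀ x η ζ, J (0, η) (0, ζ) (x, 0) = 0 := fun x η ζ => by
    rw [hswap₂₃, h₁₀₁, neg_zero]
  have split : ∀ z : M × N, z = (z.1, 0) + (0, z.2) := fun z => by simp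
  rw [split a, split b, split c]
  simp only [hadd, hadd₂, hadd₃, h₀₀₀, h₀₀₁, h₀₁₀, h₀₁₁, h₁₀₀, h₁₀₁, h₁₁₀, h₁₁₁, add_zero]

namespace LieBialgebra

variable {K L A : Type*} [CommRing K] [LieRing L] [LieAlgebra K L] [AddCommGroup A] [Module K A]
  (ev : A ≃ₗ[K] Module.Dual K L)

noncomputable def coadjoint : L →ₗ[K] Module.End K A :=
  -(ev.symm.conj.toLinearMap ∘ₗ Module.Dual.transpose ∘ₗ
    (LieModule.toEnd K L L : L →ₗ[K] Module.End K L))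

@[simp]
lemma ev_coadjoint (x y : L) (ξ : A) : ev (coadjoint ev x ξ) y = -ev ξ ⁅x, y⁆ := by
  simp [coadjoint, LinearEquiv.conj_apply_apply, Module.Dual.transpose_apply]

lemma ev_lie (σ : A) (x y : L) : ev σ ⁅x, y⁆ = -ev (coadjoint ev x σ) y := by simp

lemma eq_of_ev_eq {ξ η : A} (h : ∀ x, ev ξ x = ev η x) : ξ = η :=
  ev.injective (LinearMap.ext h)

lemma coadjoint_lie (x y : L) (ξ : A) :
    coadjoint ev ⁅x, y⁆ ξ =
      coadjoint ev x (coadjoint ev y ξ) - coadjoint ev y (coadjoint ev x ξ) :=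
  eq_of_ev_eq ev fun z => by
    simp only [ev_coadjoint, map_sub, LinearMap.sub_apply, leibniz_lie x y z, map_add]
    ring

variable (br : A →ₗ[K] A →ₗ[K] A)

/-- The cobracket `L → Λ²L` dual to `br` is a 1-cocycle for the adjoint action. -/
def IsCocycle : Prop := ∀ (x y : L) (ξ η : A), ev (br ξ η) ⁅x, y⁆ =
    -ev (br (coadjoint ev x ξ) η) y - ev (br ξ (coadjoint ev x η)) y
      + ev (br (coadjoint ev y ξ) η) x + ev (br ξ (coadjoint ev y η)) x

variable [Module.IsReflexive K L]

noncomputable def dualEquiv : L ≃ₗ[K] Module.Dual K A :=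
  (Module.evalEquiv K L).trans ev.dualMap

@[simp]
lemma dualEquiv_apply (x : L) (ξ : A) : dualEquiv ev x ξ = ev ξ x := rfl

lemma eq_of_ev_apply_eq {x y : L} (h : ∀ ξ, ev ξ x = ev ξ y) : x = y :=
  (dualEquiv ev).injective (LinearMap.ext h)

noncomputable def dualCoadjoint : A →ₗ[K] Module.End K L :=
  -((dualEquiv ev).symm.conj.toLinearMap ∘ₗ Module.Dual.transpose ∘ₗ br)

@[simp]
lemma ev_dualCoadjoint (ξ τ : A) (y : L) :
    ev τ (dualCoadjoint ev br ξ y) = -ev (br ξ τ) y := by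
  rw [← dualEquiv_apply]
  simp [dualCoadjoint, LinearEquiv.conj_apply_apply, Module.Dual.transpose_apply]

lemma dualCoadjoint_br (hjacobi : ∀ ξ η τ, br ξ (br η τ) = br (br ξ η) τ + br η (br ξ τ))
    (ξ η : A) (y : L) :
    dualCoadjoint ev br (br ξ η) y =
      dualCoadjoint ev br ξ (dualCoadjoint ev br η y)
        - dualCoadjoint ev br η (dualCoadjoint ev br ξ y) :=
  eq_of_ev_apply_eq ev fun τ => by simp [hjacobi ξ η τ]

lemma dualCoadjoint_lie (hcocycle : IsCocycle ev br) (τ : A) (x y : L) :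
    dualCoadjoint ev br τ ⁅x, y⁆ =
      ⁅x, dualCoadjoint ev br τ y⁆ - ⁅y, dualCoadjoint ev br τ x⁆
        + dualCoadjoint ev br (coadjoint ev y τ) x - dualCoadjoint ev br (coadjoint ev x τ) y :=
  eq_of_ev_apply_eq ev fun σ => by
    simp only [ev_dualCoadjoint, map_add, map_sub, ev_lie ev σ]
    linear_combination -hcocycle x y τ σ

lemma coadjoint_br (hskew : ∀ ξ η, br ξ η = -br η ξ) (hcocycle : IsCocycle ev br)
    (x : L) (η τ : A) :
    coadjoint ev x (br η τ) =
      br (coadjoint ev x η) τ + br η (coadjoint ev x τ)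
        - coadjoint ev (dualCoadjoint ev br η x) τ + coadjoint ev (dualCoadjoint ev br τ x) η :=
  eq_of_ev_eq ev fun y => by
    have ev_coadjoint_dualCoadjoint : ∀ ξ σ,
        ev (coadjoint ev (dualCoadjoint ev br ξ x) σ) y = ev (br ξ (coadjoint ev y σ)) x :=
      fun ξ σ => by
        rw [ev_coadjoint, ← lie_skew, map_neg, neg_neg, ev_lie, ev_dualCoadjoint, neg_neg]
    rw [ev_coadjoint]
    simp only [map_add, map_sub, LinearMap.add_apply, LinearMap.sub_apply,
      ev_coadjoint_dualCoadjoint, hskew τ (coadjoint ev y η), map_neg, LinearMap.neg_apply]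
    linear_combination -hcocycle x y η τ

noncomputable def bracket : L × A →ₗ[K] L × A →ₗ[K] L × A :=
  LinearMap.mk₂ K (fun z w =>
      (⁅z.1, w.1⁆ + dualCoadjoint ev br z.2 w.1 - dualCoadjoint ev br w.2 z.1,
        br z.2 w.2 + coadjoint ev z.1 w.2 - coadjoint ev w.1 z.2))
    (fun _ _ _ => by ext <;> simp <;> abel)
    (fun _ _ _ => by ext <;> simp [smul_sub])
    (fun _ _ _ => by ext <;> simp <;> abel)
    (fun _ _ _ => by ext <;> simp [smul_sub])

@[simp]
lemma bracket_apply (z w : L × A) : bracket ev br z w =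
    (⁅z.1, w.1⁆ + dualCoadjoint ev br z.2 w.1 - dualCoadjoint ev br w.2 z.1,
      br z.2 w.2 + coadjoint ev z.1 w.2 - coadjoint ev w.1 z.2) := rfl

lemma bracket_skew (hskew : ∀ ξ η, br ξ η = -br η ξ) (z w : L × A) :
    bracket ev br z w = -bracket ev br w z := by
  ext
  · simp only [bracket_apply, Prod.fst_neg, ← lie_skew w.1 z.1]; abel
  · simp only [bracket_apply, Prod.snd_neg, hskew z.2 w.2]; abel

lemma bracket_inl_inl (x y : L) : bracket ev br (x, 0) (y, 0) = (⁅x, y⁆, 0) := by simp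

lemma bracket_inr_inr (ξ η : A) : bracket ev br (0, ξ) (0, η) = (0, br ξ η) := by simp

lemma leibniz_inl_inl_inl (x y z : L) :
    bracket ev br (x, 0) (bracket ev br (y, 0) (z, 0)) =
      bracket ev br (bracket ev br (x, 0) (y, 0)) (z, 0)
        + bracket ev br (y, 0) (bracket ev br (x, 0) (z, 0)) := by
  simp only [bracket_inl_inl, leibniz_lie x y z, Prod.mk_add_mk, add_zero]

lemma leibniz_inl_inl_inr (hcocycle : IsCocycle ev br) (x y : L) (τ : A) :
    bracket ev br (x, 0) (bracket ev br (y, 0) (0, τ)) =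
      bracket ev br (bracket ev br (x, 0) (y, 0)) (0, τ)
        + bracket ev br (y, 0) (bracket ev br (x, 0) (0, τ)) := by
  ext
  · simp only [bracket_apply, map_zero, LinearMap.zero_apply, lie_zero, add_zero, zero_add,
      sub_zero, zero_sub, map_neg, lie_neg, Prod.fst_add, dualCoadjoint_lie ev br hcocycle]
    abel
  · simp only [bracket_apply, map_zero, LinearMap.zero_apply, add_zero, zero_add, sub_zero,
      Prod.snd_add, coadjoint_lie]
    abel

lemma leibniz_inl_inr_inr (hskew : ∀ ξ η, br ξ η = -br η ξ)
    (hjacobi : ∀ ξ η τ, br ξ (br η τ) = br (br ξ η) τ + br η (br ξ τ))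
    (hcocycle : IsCocycle ev br) (x : L) (η τ : A) :
    bracket ev br (x, 0) (bracket ev br (0, η) (0, τ)) =
      bracket ev br (bracket ev br (x, 0) (0, η)) (0, τ)
        + bracket ev br (0, η) (bracket ev br (x, 0) (0, τ)) := by
  ext
  · simp only [bracket_apply, map_zero, LinearMap.zero_apply, lie_zero, zero_lie, add_zero,
      zero_add, sub_zero, zero_sub, map_neg, Prod.fst_add, dualCoadjoint_br ev br hjacobi]
    abel
  · simp only [bracket_apply, map_zero, LinearMap.zero_apply, lie_zero, add_zero, zero_add,
      sub_zero, zero_sub, map_neg, LinearMap.neg_apply, Prod.snd_add,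
      coadjoint_br ev br hskew hcocycle]
    abel

lemma leibniz_inr_inr_inr (hjacobi : ∀ ξ η τ, br ξ (br η τ) = br (br ξ η) τ + br η (br ξ τ))
    (ξ η τ : A) :
    bracket ev br (0, ξ) (bracket ev br (0, η) (0, τ)) =
      bracket ev br (bracket ev br (0, ξ) (0, η)) (0, τ)
        + bracket ev br (0, η) (bracket ev br (0, ξ) (0, τ)) := by
  simp only [bracket_inr_inr, hjacobi ξ η τ, Prod.mk_add_mk, add_zero]

theorem bracket_leibniz (hskew : ∀ ξ η, br ξ η = -br η ξ)
    (hjacobi : ∀ ξ η τ, br ξ (br η τ) = br (br ξ η) τ + br η (br ξ τ))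
    (hcocycle : IsCocycle ev br) (a b c : L × A) :
    bracket ev br a (bracket ev br b c) =
      bracket ev br (bracket ev br a b) c + bracket ev br b (bracket ev br a c) := by
  set B := bracket ev br
  have hB : ∀ z w, B z w = -B w z := bracket_skew ev br hskew
  have jacobiator_eq_zero : B a (B b c) - B (B a b) c - B b (B a c) = 0 := by
    refine Prod.eq_zero_of_antisymm_of_sorted
      (J := fun a b c => B a (B b c) - B (B a b) c - B b (B a c))
      (fun a a' b c => ?_) (fun a b c => ?_) (fun a b c => ?_) (fun x y z => ?_)
      (fun x y τ => ?_) (fun x η τ => ?_) (fun ξ η τ => ?_) a b c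
    · simp only [map_add, LinearMap.add_apply]; abel
    · simp only [hB b a, map_neg, LinearMap.neg_apply]; abel
    · simp only [hB c b, hB (B a c) b, hB c (B a b), map_neg]; abel
    · rw [sub_sub, sub_eq_zero]; exact leibniz_inl_inl_inl ev br x y z
    · rw [sub_sub, sub_eq_zero]; exact leibniz_inl_inl_inr ev br hcocycle x y τ
    · rw [sub_sub, sub_eq_zero]; exact leibniz_inl_inr_inr ev br hskew hjacobi hcocycle x η τ
    · rw [sub_sub, sub_eq_zero]; exact leibniz_inr_inr_inr ev br hjacobi ξ η τ
  rwa [sub_sub, sub_eq_zero] at jacobiator_eq_zero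

def pairing (z w : L × A) : K := ev z.2 w.1 + ev w.2 z.1

lemma pairing_bracket_add_pairing_bracket (hskew : ∀ ξ η, br ξ η = -br η ξ) (z w u : L × A) :
    pairing ev (bracket ev br z w) u + pairing ev w (bracket ev br z u) = 0 := by
  have hlie : ev z.2 ⁅u.1, w.1⁆ = -ev z.2 ⁅w.1, u.1⁆ := by rw [← lie_skew, map_neg]
  simp only [pairing, bracket_apply, map_add, map_sub, LinearMap.add_apply, LinearMap.sub_apply,
    ev_coadjoint, ev_dualCoadjoint, hskew u.2 w.2, map_neg, LinearMap.neg_apply]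
  linear_combination hlie

lemma fst_eq_zero_of_pairing_inr (z : L × A) (h : ∀ ξ, pairing ev z (0, ξ) = 0) : z.1 = 0 :=
  eq_of_ev_apply_eq ev fun ξ => by simpa [pairing] using h ξ

lemma eq_zero_of_pairing (z : L × A) (h : ∀ w, pairing ev z w = 0) : z = 0 :=
  Prod.ext (fst_eq_zero_of_pairing_inr ev z fun ξ => h (0, ξ))
    (eq_of_ev_eq ev fun y => by simpa [pairing] using h (y, 0))

end LieBialgebra

lemma Submodule.exists_bilinear_of_apply_eq {K V : Type*} [CommRing K] [AddCommGroup V]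
    [Module K V] {S : Submodule K (Module.Dual K V)} (δ : V →ₗ[K] S →ₗ[K] S →ₗ[K] K)
    {db : S → S → S} (hdb : ∀ ξ η x, (db ξ η : Module.Dual K V) x = δ x ξ η) :
    ∃ br : S →ₗ[K] S →ₗ[K] S, ∀ ξ η, br ξ η = db ξ η := by
  refine ⟨LinearMap.mk₂ K db ?_ ?_ ?_ ?_, fun _ _ => rfl⟩ <;>
    intros <;> ext <;> simp [hdb]

section AnnihilatorDouble

open LieBialgebra

variable (I : LieIdeal ℝ g)

-- `A := annIdeal I` is passed explicitly throughout: the submodule's own `AddCommMonoid`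
-- instance does not unify with `AddCommGroup.toAddCommMonoid ?_` before `A` is known.

noncomputable abbrev annIdealEquiv : annIdeal I ≃ₗ[ℝ] Module.Dual ℝ (g ⧸ I) :=
  (Submodule.dualQuotEquivDualAnnihilator I.toSubmodule).symm

lemma annIdealEquiv_mk (ξ : annIdeal I) (x : g) :
    annIdealEquiv I ξ (Submodule.Quotient.mk x) = (ξ : Module.Dual ℝ g) x := rfl

lemma dblPairing_eq_pairing : dblPairing I = pairing (annIdealEquiv I) := by
  have evalQ_eq (ξ : annIdeal I) : evalQ I ξ = annIdealEquiv I ξ :=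
    Submodule.linearMap_qext _ rfl
  ext z w
  simp only [dblPairing, pairing, evalQ_eq]

lemma coadA_eq_coadjoint (x : g) (ξ : annIdeal I) :
    coadA I x ξ = coadjoint (annIdealEquiv I) (LieSubmodule.Quotient.mk x) ξ := by
  refine eq_of_ev_eq (annIdealEquiv I) fun y => ?_
  obtain ⟨y, rfl⟩ := Submodule.Quotient.mk_surjective _ y
  calc annIdealEquiv I (coadA I x ξ) (Submodule.Quotient.mk y)
      = -annIdealEquiv I ξ (LieSubmodule.Quotient.mk ⁅x, y⁆) := rfl
    _ = -annIdealEquiv I ξ ⁅LieSubmodule.Quotient.mk x, LieSubmodule.Quotient.mk y⁆ := by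
      rw [LieSubmodule.Quotient.mk_bracket]
    _ = _ := (ev_coadjoint (annIdealEquiv I) (LieSubmodule.Quotient.mk x)
      (LieSubmodule.Quotient.mk y) ξ).symm

lemma isCocycle_annIdealEquiv (δ : g →ₗ[ℝ] (annIdeal I →ₗ[ℝ] annIdeal I →ₗ[ℝ] ℝ))
    (hcocycle : ∀ x y ξ η, δ ⁅x, y⁆ ξ η
      = (- δ y (coadA I x ξ) η - δ y ξ (coadA I x η))
        - (- δ x (coadA I y ξ) η - δ x ξ (coadA I y η)))
    (br : annIdeal I →ₗ[ℝ] annIdeal I →ₗ[ℝ] annIdeal I)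
    (hbr : ∀ ξ η x, (br ξ η : Module.Dual ℝ g) x = δ x ξ η) :
    IsCocycle (A := annIdeal I) (annIdealEquiv I) br := by
  intro x y ξ η
  obtain ⟨x, rfl⟩ := Submodule.Quotient.mk_surjective _ x
  obtain ⟨y, rfl⟩ := Submodule.Quotient.mk_surjective _ y
  simp only [← coadA_eq_coadjoint, annIdealEquiv_mk, hbr]
  rw [← LieSubmodule.Quotient.mk_bracket, annIdealEquiv_mk, hbr, hcocycle]
  ring

lemma PhiMap_eq (x : g) : PhiMap I x = (LieSubmodule.Quotient.mk x, 0) := rfl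

lemma bracket_PhiMap [FiniteDimensional ℝ g]
    (br : annIdeal I →ₗ[ℝ] annIdeal I →ₗ[ℝ] annIdeal I) (x y : g) :
    bracket (A := annIdeal I) (annIdealEquiv I) br (PhiMap I x) (PhiMap I y) =
      PhiMap I ⁅x, y⁆ := by
  have h := bracket_inl_inl (A := annIdeal I) (annIdealEquiv I) br
    (LieSubmodule.Quotient.mk x) (LieSubmodule.Quotient.mk y)
  rw [PhiMap_eq, PhiMap_eq, PhiMap_eq, h, LieSubmodule.Quotient.mk_bracket]

lemma exists_PhiMap_add_inr (z : (g ⧸ I) × annIdeal I) :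
    ∃ (x : g) (ξ : annIdeal I), z = PhiMap I x + ((0 : g ⧸ I), ξ) := by
  obtain ⟨x, hx⟩ := Submodule.Quotient.mk_surjective _ z.1
  exact ⟨x, z.2, by simp [PhiMap, hx]⟩

end AnnihilatorDouble

open LieBialgebra in
theorem manin_pair_of_dirac_lie_group_cocycle
    [FiniteDimensional ℝ g] (I : LieIdeal ℝ g)
    -- `δ : g → Λ²(g/i)`, an element of `Λ²(g/i)` being seen as a skew bilinear form
    -- on `i° ≅ (g/i)*`:
    (δ : g →ₗ[ℝ] (annIdeal I →ₗ[ℝ] annIdeal I →ₗ[ℝ] ℝ))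
    (hδskew : ∀ x ξ η, δ x ξ η = - δ x η ξ)
    -- `δ` is a 1-cocycle for the natural `g`-module structure on `Λ²(g/i)`:
    (hcocycle : ∀ x y ξ η, δ ⁅x, y⁆ ξ η
      = (- δ y (coadA I x ξ) η - δ y ξ (coadA I x η))
        - (- δ x (coadA I y ξ) η - δ x ξ (coadA I y η)))
    -- the dual `δᵗ : i° × i° → g*` takes values in `i°` and defines a Lie bracket:
    (db : annIdeal I → annIdeal I → annIdeal I)
    (hdb : ∀ ξ η x, (db ξ η : Module.Dual ℝ g) x = δ x ξ η)
    (hdb_jacobi : ∀ ξ η ζ, db ξ (db η ζ) = db (db ξ η) ζ + db η (db ξ ζ)) :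
    ∃ Bm : ((g ⧸ I) × annIdeal I) → ((g ⧸ I) × annIdeal I) → ((g ⧸ I) × annIdeal I),
      -- `Bm` is ℝ-bilinear:
      (∀ z₁ z₂ w, Bm (z₁ + z₂) w = Bm z₁ w + Bm z₂ w) ∧
      (∀ z w₁ w₂, Bm z (w₁ + w₂) = Bm z w₁ + Bm z w₂) ∧
      (∀ (r : ℝ) z w, Bm (r • z) w = r • Bm z w) ∧
      (∀ (r : ℝ) z w, Bm z (r • w) = r • Bm z w) ∧
      -- `Bm` is a Lie bracket:
      (∀ z w, Bm z w = - Bm w z) ∧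
      (∀ z w u, Bm z (Bm w u) = Bm (Bm z w) u + Bm w (Bm z u)) ∧
      -- the pairing is invariant, so `(m, Bm, ⟨·,·⟩)` is a quadratic Lie algebra:
      (∀ z w u, dblPairing I (Bm z w) u + dblPairing I w (Bm z u) = 0) ∧
      (∀ z, (∀ w, dblPairing I z w = 0) → z = 0) ∧
      -- `Bm` restricts to the Lie bracket on `g/i` and to `δᵗ` on `i°`:
      (∀ xq yq : g ⧸ I, Bm (xq, 0) (yq, 0) = (⁅xq, yq⁆, 0)) ∧
      (∀ ξ η : annIdeal I, Bm (0, ξ) (0, η) = (0, db ξ η)) ∧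
      -- `i°` is Lagrangian in `m` (it is isotropic by the pairing formula, and maximal):
      (∀ ξ η : annIdeal I,
        dblPairing I ((0 : g ⧸ I), ξ) ((0 : g ⧸ I), η) = 0) ∧
      (∀ z : (g ⧸ I) × annIdeal I,
        (∀ ξ : annIdeal I, dblPairing I z ((0 : g ⧸ I), ξ) = 0) → z.1 = 0) ∧
      -- `Φ` is a Lie algebra morphism with isotropic image:
      (∀ x y : g, Bm (PhiMap I x) (PhiMap I y) = PhiMap I ⁅x, y⁆) ∧
      (∀ x y : g, dblPairing I (PhiMap I x) (PhiMap I y) = 0) ∧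
      -- `Φ(g) + i° = m`:
      (∀ z : (g ⧸ I) × annIdeal I, ∃ (x : g) (ξ : annIdeal I),
        z = PhiMap I x + ((0 : g ⧸ I), ξ)) ∧
      -- compatibility of the pairings: `⟨Φ(x), ξ⟩ = ξ(x)`:
      (∀ (x : g) (ξ : annIdeal I),
        dblPairing I (PhiMap I x) ((0 : g ⧸ I), ξ) = (ξ : Module.Dual ℝ g) x) := by
  obtain ⟨br, hbr⟩ := Submodule.exists_bilinear_of_apply_eq δ hdb
  obtain rfl : db = fun ξ η => br ξ η := funext₂ fun ξ η => (hbr ξ η).symm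
  have hskew : ∀ ξ η, br ξ η = -br η ξ := fun ξ η =>
    Subtype.ext (LinearMap.ext fun x => by simp [hdb, hδskew x ξ η])
  set ev := annIdealEquiv I
  have hcocycle' := isCocycle_annIdealEquiv I δ hcocycle br hdb
  have hbracket_skew := bracket_skew (A := annIdeal I) ev br hskew
  have hleibniz := bracket_leibniz (A := annIdeal I) ev br hskew hdb_jacobi hcocycle'
  have hinvariant := pairing_bracket_add_pairing_bracket (A := annIdeal I) ev br hskew
  have hnondeg := eq_zero_of_pairing (A := annIdeal I) ev
  have hmaximal := fst_eq_zero_of_pairing_inr (A := annIdeal I) ev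
  have hinl := bracket_inl_inl (A := annIdeal I) ev br
  have hinr := bracket_inr_inr (A := annIdeal I) ev br
  have hPhi := bracket_PhiMap I br
  rw [dblPairing_eq_pairing]
  exact ⟨fun z w => bracket ev br z w, LinearMap.map_add₂ _, fun z => map_add _,
    LinearMap.map_smul₂ _, fun r z => map_smul _ r, hbracket_skew, hleibniz, hinvariant,
    hnondeg, hinl, hinr, fun ξ η => by simp [pairing], hmaximal, hPhi,
    fun x y => by simp [pairing, PhiMap], exists_PhiMap_add_inr I,
    fun x ξ => by simp [pairing, PhiMap, annIdealEquiv_mk]⟩
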